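/- Let S be an inverse semigroup with a zero element 0 such that Z(S)× is nonempty. Then gr(Γ(S)) = 4 if and only if Γ(S) is a bipartite graph but not a star graph (a star graph being one that has a vertex c adjacent to every other vertex such that every edge has c as an endpoint). -/

import Mathlib

namespace ZDG

variable {S : Type*} [Semigroup S]

/-- The natural partial order on an inverse semigroup: `a ≤ b` iff `a = e * b`
for some idempotent `e`. -/
def nle (a b : S) : Prop := ∃ e : S, e * e = e ∧ a = e * b

/-- `omg a b` is the set `ω(a,b)` of common lower bounds of `a` and `b` with respect
to the natural partial order. -/
def omg (a b : S) : Set S := {c | nle c a ∧ nle c b}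

lemma omg_comm (a b : S) : omg a b = omg b a := by
  ext c; exact and_comm

/-- `Zx z` is the set `Z(S)×` of nonzero zero-divisors of `S` (with zero element `z`). -/
def Zx (z : S) : Set S := {a | a ≠ z ∧ ∃ b : S, b ≠ z ∧ omg a b = {z}}

/-- The zero-divisor graph `Γ(S)`: vertices are the elements of `Z(S)×`, and two
distinct vertices `a`, `b` are adjacent iff `ω(a,b) = {z}`. -/
def ZDGraph (z : S) : SimpleGraph (Zx z) where
  Adj a b := (a : S) ≠ (b : S) ∧ omg (a : S) (b : S) = {z}
  symm := by
    constructor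
    rintro a b ⟨h1, h2⟩
    exact ⟨fun h => h1 h.symm, (omg_comm (b : S) (a : S)).trans h2⟩
  loopless := by constructor; rintro a ⟨h1, -⟩; exact h1 rfl

/-- The set of minimal elements of `S \ {z}` with respect to the natural partial order. -/
def MinOf (z : S) : Set S := {x | x ≠ z ∧ ∀ y : S, y ≠ z → nle y x → y = x}

/-- The annihilator of `x`: the set of `y` with `ω(x,y) = {z}`. -/
def Ann (z : S) (x : S) : Set S := {y | omg x y = {z}}

end ZDG

open ZDG

open ZDG SimpleGraph


-- generic graph helpers
lemma cyc3 {V : Type*} {G : SimpleGraph V} {a b c : V}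
    (h1 : G.Adj a b) (h2 : G.Adj b c) (h3 : G.Adj c a) :
    ∃ w : G.Walk a a, w.IsCycle ∧ w.length = 3 := by
  refine ⟨.cons h1 (.cons h2 (.cons h3 .nil)), ?_, rfl⟩
  have hab := h1.ne; have hbc := h2.ne; have hca := h3.ne
  simp [Walk.isCycle_def, Walk.isTrail_def, List.Nodup, Sym2.eq_iff]
  aesop

lemma cyc4 {V : Type*} {G : SimpleGraph V} {a b c d : V}
    (h1 : G.Adj a b) (h2 : G.Adj b c) (h3 : G.Adj c d) (h4 : G.Adj d a)
    (hac : a ≠ c) (hbd : b ≠ d) :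
    ∃ w : G.Walk a a, w.IsCycle ∧ w.length = 4 := by
  refine ⟨.cons h1 (.cons h2 (.cons h3 (.cons h4 .nil))), ?_, rfl⟩
  have hab := h1.ne; have hbc := h2.ne; have hcd := h3.ne; have hda := h4.ne
  simp [Walk.isCycle_def, Walk.isTrail_def, List.Nodup, Sym2.eq_iff]
  aesop

lemma egirth_le_len {V : Type*} {G : SimpleGraph V} {a : V} {w : G.Walk a a}
    (hc : w.IsCycle) : G.egirth ≤ w.length := by
  rw [SimpleGraph.egirth]
  exact iInf_le_of_le a (iInf_le_of_le w (iInf_le_of_le hc le_rfl))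


lemma cyc3_struct {V : Type*} {G : SimpleGraph V} {a : V} {w : G.Walk a a}
    (hc : w.IsCycle) (hl : w.length = 3) :
    ∃ b c : V, G.Adj a b ∧ G.Adj b c ∧ G.Adj c a := by
  cases w with
  | nil => simp at hl
  | cons h1 w1 =>
    cases w1 with
    | nil => simp at hl
    | cons h2 w2 =>
      cases w2 with
      | nil => simp at hl
      | cons h3 w3 =>
        cases w3 with
        | nil => exact ⟨_, _, h1, h2, h3⟩
        | cons h4 w4 => simp [Walk.length_cons] at hl

lemma cyc4_struct {V : Type*} {G : SimpleGraph V} {a : V} {w : G.Walk a a}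
    (hc : w.IsCycle) (hl : w.length = 4) :
    ∃ b c d : V, G.Adj a b ∧ G.Adj b c ∧ G.Adj c d ∧ G.Adj d a ∧ a ≠ c ∧ b ≠ d := by
  cases w with
  | nil => simp at hl
  | cons h1 w1 =>
    cases w1 with
    | nil => simp at hl
    | cons h2 w2 =>
      cases w2 with
      | nil => simp at hl
      | cons h3 w3 =>
        cases w3 with
        | nil => simp at hl
        | cons h4 w4 =>
          cases w4 with
          | nil =>
            rw [Walk.isCycle_def] at hc
            have hnd := hc.2.2
            simp [Walk.support_cons] at hnd
            refine ⟨_, _, _, h1, h2, h3, h4, ?_, ?_⟩ <;> aesop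
          | cons h5 w5 => simp [Walk.length_cons] at hl


section AuxSem
variable {S : Type*} [Semigroup S] {z : S}

lemma nle_refl (hinv : ∀ a : S, ∃ b : S, a * b * a = a ∧ b * a * b = b) (a : S) :
    nle a a := by
  obtain ⟨b, h1, _⟩ := hinv a
  exact ⟨a * b, by rw [← mul_assoc, h1], h1.symm⟩

lemma nle_trans (hcomm : ∀ e f : S, e * e = e → f * f = f → e * f = f * e)
    {a b c : S} (h1 : nle a b) (h2 : nle b c) : nle a c := by
  obtain ⟨e, he, hae⟩ := h1
  obtain ⟨f, hf, hbf⟩ := h2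
  refine ⟨e * f, ?_, by rw [hae, hbf, mul_assoc]⟩
  rw [mul_assoc, ← mul_assoc f e f, ← hcomm e f he hf, mul_assoc e f f, hf,
    ← mul_assoc, he]

lemma nle_z (hz : ∀ x : S, z * x = z ∧ x * z = z) (a : S) : nle z a :=
  ⟨z, (hz z).1, ((hz a).1).symm⟩

lemma z_mem_omg (hz : ∀ x : S, z * x = z ∧ x * z = z) (a b : S) : z ∈ omg a b :=
  ⟨nle_z hz a, nle_z hz b⟩

lemma omg_eq_singleton (hz : ∀ x : S, z * x = z ∧ x * z = z) {a b : S}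
    (h : ∀ c ∈ omg a b, c = z) : omg a b = {z} :=
  Set.eq_singleton_iff_unique_mem.mpr ⟨z_mem_omg hz a b, h⟩

lemma omg_mono (hcomm : ∀ e f : S, e * e = e → f * f = f → e * f = f * e)
    {a b a' b' : S} (h1 : nle a a') (h2 : nle b b') : omg a b ⊆ omg a' b' :=
  fun _ hc => ⟨nle_trans hcomm hc.1 h1, nle_trans hcomm hc.2 h2⟩

lemma adj_ne (hinv : ∀ a : S, ∃ b : S, a * b * a = a ∧ b * a * b = b)
    {a b : S} (h : omg a b = {z}) (ha : a ≠ z) : a ≠ b := by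
  intro hab
  apply ha
  have : a ∈ omg a b := ⟨nle_refl hinv a, hab ▸ nle_refl hinv a⟩
  rwa [h] at this

/-- extract a nonzero element from a non-`{z}` `omg` set. -/
lemma exists_nz (hz : ∀ x : S, z * x = z ∧ x * z = z) {a b : S}
    (h : omg a b ≠ {z}) : ∃ c, c ∈ omg a b ∧ c ≠ z := by
  by_contra hh
  push_neg at hh
  exact h (omg_eq_singleton hz hh)

end AuxSem
section AuxGraph
variable {S : Type*} [Semigroup S] {z : S}

lemma zd_adj_iff {u v : Zx z} :
    (ZDGraph z).Adj u v ↔ (u : S) ≠ (v : S) ∧ omg (u : S) (v : S) = {z} := Iff.rfl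

variable (hinv : ∀ a : S, ∃ b : S, a * b * a = a ∧ b * a * b = b)
  (hcomm : ∀ e f : S, e * e = e → f * f = f → e * f = f * e)
  (hz : ∀ x : S, z * x = z ∧ x * z = z)

include hinv hcomm hz

omit hcomm hz in
lemma adj_of_omg {u v : Zx z} (h : omg (u : S) (v : S) = {z}) :
    (ZDGraph z).Adj u v :=
  ⟨adj_ne hinv h u.2.1, h⟩

/-- covering lemma: in a triangle-free graph with edge `a-b`, every vertex is
adjacent to `a` or to `b`. -/
lemma cover (hnt : ∀ x y w : Zx z, (ZDGraph z).Adj x y → (ZDGraph z).Adj y w →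
      (ZDGraph z).Adj x w → False)
    {a b : Zx z} (hab : (ZDGraph z).Adj a b) (v : Zx z) :
    (ZDGraph z).Adj v a ∨ (ZDGraph z).Adj v b := by
  by_contra h
  push_neg at h
  -- neither omg v a = {z} nor omg v b = {z}
  have hva : omg (v : S) (a : S) ≠ {z} := fun hh => h.1 (adj_of_omg hinv hh)
  have hvb : omg (v : S) (b : S) ≠ {z} := fun hh => h.2 (adj_of_omg hinv hh)
  obtain ⟨p, ⟨hpv, hpa⟩, hpz⟩ := exists_nz hz hva
  obtain ⟨q, ⟨hqv, hqb⟩, hqz⟩ := exists_nz hz hvb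
  obtain ⟨hvz, w, hwz, hvw⟩ := v.2
  have hpq : omg p q = {z} :=
    omg_eq_singleton hz fun c hc => by
      have := hab.2 ▸ (omg_mono hcomm hpa hqb hc); exact this
  have hpw : omg p w = {z} :=
    omg_eq_singleton hz fun c hc => by
      have := hvw ▸ (omg_mono hcomm hpv (nle_refl hinv w) hc); exact this
  have hqw : omg q w = {z} :=
    omg_eq_singleton hz fun c hc => by
      have := hvw ▸ (omg_mono hcomm hqv (nle_refl hinv w) hc); exact this
  have hwZ : w ∈ Zx z := ⟨hwz, p, hpz, (omg_comm p w) ▸ hpw⟩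
  have hpZ : p ∈ Zx z := ⟨hpz, q, hqz, hpq⟩
  have hqZ : q ∈ Zx z := ⟨hqz, p, hpz, (omg_comm p q) ▸ hpq⟩
  exact hnt ⟨p, hpZ⟩ ⟨q, hqZ⟩ ⟨w, hwZ⟩ (adj_of_omg hinv hpq)
    (adj_of_omg hinv hqw) (adj_of_omg hinv hpw)

/-- if the graph is triangle-free with edge `a-b` and `a` is not a star center,
then there is a neighbour of `b` different from `a`. -/
lemma exists_side (hnt : ∀ x y w : Zx z, (ZDGraph z).Adj x y → (ZDGraph z).Adj y w →
      (ZDGraph z).Adj x w → False)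
    {a b : Zx z} (hab : (ZDGraph z).Adj a b)
    (hns : ¬ ((∀ v : Zx z, v ≠ a → (ZDGraph z).Adj a v) ∧
      ∀ u v : Zx z, (ZDGraph z).Adj u v → u = a ∨ v = a)) :
    ∃ v : Zx z, (ZDGraph z).Adj v b ∧ v ≠ a := by
  by_cases hP : ∀ v : Zx z, v ≠ a → (ZDGraph z).Adj a v
  · have hQ : ¬ ∀ u v : Zx z, (ZDGraph z).Adj u v → u = a ∨ v = a := fun hq => hns ⟨hP, hq⟩
    push_neg at hQ
    obtain ⟨u, v, huv, hua, hva⟩ := hQ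
    rcases cover hinv hcomm hz hnt hab u with hu | hu
    · rcases cover hinv hcomm hz hnt hab v with hv | hv
      · exact absurd (hnt u v a huv hv hu) id
      · exact ⟨v, hv, hva⟩
    · exact ⟨u, hu, hua⟩
  · push_neg at hP
    obtain ⟨v, hva, hnadj⟩ := hP
    rcases cover hinv hcomm hz hnt hab v with hv | hv
    · exact absurd hv.symm hnadj
    · exact ⟨v, hv, hva⟩

end AuxGraph

/-- `gr(Γ(S)) = 4` iff `Γ(S)` is bipartite but not a star graph. -/
theorem stmt9 {S : Type*} [Semigroup S] [Nontrivial S]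
    (hinv : ∀ a : S, ∃ b : S, a * b * a = a ∧ b * a * b = b)
    (hcomm : ∀ e f : S, e * e = e → f * f = f → e * f = f * e)
    (z : S) (hz : ∀ x : S, z * x = z ∧ x * z = z)
    (h1 : (Zx z).Nonempty) :
    (ZDGraph z).egirth = 4 ↔
      (∃ A : Set (Zx z), ∀ u v : Zx z, (ZDGraph z).Adj u v →
          ((u ∈ A ∧ v ∉ A) ∨ (u ∉ A ∧ v ∈ A))) ∧
      ¬ (∃ c : Zx z, (∀ v : Zx z, v ≠ c → (ZDGraph z).Adj c v) ∧
          ∀ u v : Zx z, (ZDGraph z).Adj u v → u = c ∨ v = c) := by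
  classical
  obtain ⟨a0, haz, b0, hbz, hab0⟩ := h1
  have ha0 : a0 ∈ Zx z := ⟨haz, b0, hbz, hab0⟩
  have hb0 : b0 ∈ Zx z := ⟨hbz, a0, haz, (omg_comm a0 b0) ▸ hab0⟩
  set va : Zx z := ⟨a0, ha0⟩ with hva
  set vb : Zx z := ⟨b0, hb0⟩ with hvb
  have hAB : (ZDGraph z).Adj va vb := adj_of_omg hinv hab0
  constructor
  · intro hg
    have hnt : ∀ x y w : Zx z, (ZDGraph z).Adj x y → (ZDGraph z).Adj y w →
        (ZDGraph z).Adj x w → False := by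
      intro x y w hxy hyw hxw
      obtain ⟨wk, hc, hl⟩ := cyc3 hxy hyw hxw.symm
      have hle := egirth_le_len hc
      rw [hl, hg] at hle
      exact absurd hle (by norm_num)
    refine ⟨⟨{v | (ZDGraph z).Adj v va}, ?_⟩, ?_⟩
    · intro u v huv
      by_cases hu : (ZDGraph z).Adj u va <;> by_cases hv : (ZDGraph z).Adj v va
      · exact absurd (hnt u v va huv hv hu) id
      · exact Or.inl ⟨hu, hv⟩
      · exact Or.inr ⟨hu, hv⟩
      · exfalso
        rcases cover hinv hcomm hz hnt hAB u with h | hu'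
        · exact hu h
        rcases cover hinv hcomm hz hnt hAB v with h | hv'
        · exact hv h
        exact hnt u v vb huv hv' hu'
    · rintro ⟨c, hc1, hc2⟩
      have hnac : ¬ (ZDGraph z).IsAcyclic := by
        intro hac
        rw [← SimpleGraph.egirth_eq_top, hg] at hac
        exact (by norm_num : (4 : ℕ∞) ≠ ⊤) hac
      obtain ⟨v0, wk, hcyc, hlen⟩ := (SimpleGraph.exists_egirth_eq_length).2 hnac
      rw [hg] at hlen
      have hl4 : wk.length = 4 := by exact_mod_cast hlen.symm
      obtain ⟨v1, v2, v3, h01, h12, h23, h30, h02, h13⟩ := cyc4_struct hcyc hl4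
      rcases hc2 v0 v1 h01 with h | h
      · subst h
        rcases hc2 v1 v2 h12 with h | h
        · exact h01.ne h.symm
        · exact h02 h.symm
      · subst h
        rcases hc2 v2 v3 h23 with h | h
        · exact h12.ne h.symm
        · exact h13 h.symm
  · rintro ⟨⟨Aset, hA⟩, hns⟩
    have hnt : ∀ x y w : Zx z, (ZDGraph z).Adj x y → (ZDGraph z).Adj y w →
        (ZDGraph z).Adj x w → False := by
      intro x y w hxy hyw hxw
      have t1 := hA x y hxy
      have t2 := hA y w hyw
      have t3 := hA x w hxw
      tauto
    have hns1 : ¬ ((∀ v : Zx z, v ≠ va → (ZDGraph z).Adj va v) ∧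
        ∀ u v : Zx z, (ZDGraph z).Adj u v → u = va ∨ v = va) := fun h => hns ⟨va, h⟩
    have hns2 : ¬ ((∀ v : Zx z, v ≠ vb → (ZDGraph z).Adj vb v) ∧
        ∀ u v : Zx z, (ZDGraph z).Adj u v → u = vb ∨ v = vb) := fun h => hns ⟨vb, h⟩
    obtain ⟨v, hvB, hvA⟩ := exists_side hinv hcomm hz hnt hAB hns1
    obtain ⟨u, huA, huB⟩ := exists_side hinv hcomm hz hnt hAB.symm hns2
    have huv : u ≠ v := by
      rintro rfl
      exact hnt u va vb huA hAB hvB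
    have hadj : (ZDGraph z).Adj u v := by
      by_contra hn
      have hne : (u : S) ≠ (v : S) := fun h => huv (Subtype.ext h)
      have homg : omg (u : S) (v : S) ≠ {z} := fun h => hn ⟨hne, h⟩
      obtain ⟨d, ⟨hdu, hdv⟩, hdz⟩ := exists_nz hz homg
      have hda : omg d (va : S) = {z} := omg_eq_singleton hz fun c hc => by
        have := huA.2 ▸ omg_mono hcomm hdu (nle_refl hinv (va : S)) hc
        exact this
      have hdb : omg d (vb : S) = {z} := omg_eq_singleton hz fun c hc => by
        have := hvB.2 ▸ omg_mono hcomm hdv (nle_refl hinv (vb : S)) hc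
        exact this
      have hdZ : d ∈ Zx z := ⟨hdz, (va : S), va.2.1, hda⟩
      exact hnt ⟨d, hdZ⟩ va vb (adj_of_omg hinv hda) hAB (adj_of_omg hinv hdb)
    obtain ⟨wk, hcyc, hl⟩ := cyc4 huA.symm hadj hvB hAB.symm
      (fun h => hvA h.symm) huB
    have hle : (ZDGraph z).egirth ≤ 4 := by
      have := egirth_le_len hcyc
      rw [hl] at this
      exact_mod_cast this
    have hge : (3 : ℕ∞) ≤ (ZDGraph z).egirth := SimpleGraph.three_le_egirth
    have hne3 : (ZDGraph z).egirth ≠ 3 := by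
      intro h3
      have hnac : ¬ (ZDGraph z).IsAcyclic := by
        intro hac
        rw [← SimpleGraph.egirth_eq_top, h3] at hac
        exact (by norm_num : (3 : ℕ∞) ≠ ⊤) hac
      obtain ⟨v0, wk3, hc3, hl3⟩ := (SimpleGraph.exists_egirth_eq_length).2 hnac
      rw [h3] at hl3
      have hl3' : wk3.length = 3 := by exact_mod_cast hl3.symm
      obtain ⟨v1, v2, h01, h12, h20⟩ := cyc3_struct hc3 hl3'
      exact hnt v0 v1 v2 h01 h12 h20.symm
    refine le_antisymm hle ?_
    have hlt : (3 : ℕ∞) < (ZDGraph z).egirth := lt_of_le_of_ne hge (Ne.symm hne3)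
    have h34 : (4 : ℕ∞) = 3 + 1 := by norm_num
    rw [h34]
    exact Order.add_one_le_of_lt hlt
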